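/- (Garside normal form for B₃, Xu) Every element α ∈ B₃ can be expressed as α = δᵘ·∏_{j=1}^{ℓ} a_{i_j} where u ∈ ℤ and [i₁, …, i_ℓ] is a (possibly empty) nondecreasing word, and this expression is unique: the integer u and the nondecreasing word are uniquely determined by α. -/

import Mathlib

/-!
Van der Waerden's trick. Pairs `(u, w)` with `w` a nondecreasing word carry an explicit rule for
right multiplication by each band generator `a j`: append `j` if the word stays nondecreasing;
otherwise `j = i + 2` for the last letter `i`, and `a i * a (i + 2) = δ` is moved to the front
through `w * δ = δ * τ w`. The rule for `a (i + 1)` followed by the rule for `a i` is the bijection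
`(u, w) ↦ (u + 1, τ w)`; this makes every rule a permutation and yields the defining relations,
so `B₃` acts on the pairs. Evaluating the image of `(0, [])` under `α` recovers `α` (existence),
and `δ ^ u * w` sends `(0, [])` to `(u, w)` (uniqueness).
-/

namespace Braid

/-- Relations of the dual (band-generator) presentation of the 3-braid group:
`a (i+1) * a i = a (i+2) * a (i+1)` for all `i : ZMod 3`. -/
def braidRels : Set (FreeGroup (ZMod 3)) :=
  { r | ∃ i : ZMod 3,
      r = FreeGroup.of (i + 1) * FreeGroup.of i *
          (FreeGroup.of (i + 2) * FreeGroup.of (i + 1))⁻¹ }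

/-- The 3-braid group with the band-generator presentation. -/
abbrev B3 := PresentedGroup braidRels

/-- The band generators `a i`, `i : ZMod 3`. -/
def a (i : ZMod 3) : B3 := PresentedGroup.of i

/-- The fundamental element `δ = a₂ * a₁`. -/
def δ : B3 := a 2 * a 1

/-- The submonoid of positive braids. -/
def Pos : Submonoid B3 := Submonoid.closure (Set.range a)

/-- The exponent-sum homomorphism, sending each generator to `1 : ℤ`. -/
def eHom : B3 →* Multiplicative ℤ :=
  PresentedGroup.toGroup (f := fun _ => Multiplicative.ofAdd (1 : ℤ)) (by
    rintro r ⟨i, rfl⟩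
    simp only [map_mul, map_inv, FreeGroup.lift_apply_of]
    group)

/-- The exponent sum (letter length on positive braids) as an integer. -/
def elen (x : B3) : ℤ := Multiplicative.toAdd (eHom x)

/-- The right complement `X* = X⁻¹ * δ^{e(X)}`. -/
def rc (X : B3) : B3 := X⁻¹ * δ ^ elen X

/-- The `n`-th power of the rotation automorphism `τ`: `τ^n (x) = δ^{-n} * x * δ^n`. -/
def tauPow (n : ℤ) (x : B3) : B3 := δ ^ (-n) * x * δ ^ n

/-- The positive braid represented by a list of generator indices. -/
def wordProd (l : List (ZMod 3)) : B3 := (l.map a).prod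

/-- A word is nondecreasing if each letter index is the previous one or the previous one
plus `1` (mod 3). -/
def NDWord (l : List (ZMod 3)) : Prop :=
  l.Chain' (fun x y => y = x ∨ y = x + 1)

/-- The syllable number of a word: the number of maximal constant blocks. -/
def syl : List (ZMod 3) → ℕ
  | [] => 0
  | [_] => 1
  | x :: y :: t => (if x = y then 0 else 1) + syl (y :: t)

/-- The permutations underlying the band generators. -/
def perm3 (i : ZMod 3) : Equiv.Perm (Fin 3) :=
  if i = 0 then Equiv.swap 0 2 else if i = 1 then Equiv.swap 0 1 else Equiv.swap 1 2

lemma perm3_rel : ∀ i : ZMod 3,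
    perm3 (i + 1) * perm3 i * (perm3 (i + 2) * perm3 (i + 1))⁻¹ = 1 := by decide

/-- The homomorphism to the symmetric group on 3 letters (underlying permutation). -/
def permOf : B3 →* Equiv.Perm (Fin 3) :=
  PresentedGroup.toGroup (f := perm3) (by
    rintro r ⟨i, rfl⟩
    simp only [map_mul, map_inv, FreeGroup.lift_apply_of]
    exact perm3_rel i)

/-- The set of band generators and their inverses. -/
def genSet : Set B3 := Set.range a ∪ Set.range (fun i => (a i)⁻¹)

/-- The band-generator word length of a 3-braid. -/
noncomputable def wordLen (x : B3) : ℕ :=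
  sInf { n | ∃ s : List B3, s.length = n ∧ (∀ g ∈ s, g ∈ genSet) ∧ s.prod = x }

/-- The minimal band-generator word length in the conjugacy class. -/
noncomputable def minConjLen (x : B3) : ℕ :=
  sInf { n | ∃ y, IsConj x y ∧ wordLen y = n }

/-- `α` is a summit element with summit exponent `u` if `δ^{-u} * α` is positive and `u` is
the maximal such exponent over the conjugacy class. -/
def IsSummit (α : B3) (u : ℤ) : Prop :=
  δ ^ (-u) * α ∈ Pos ∧ ∀ β : B3, IsConj α β → ∀ v : ℤ, δ ^ (-v) * β ∈ Pos → v ≤ u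

lemma add_two_add_one_eq_self (i : ZMod 3) : i + 2 + 1 = i := by
  revert i; decide

lemma a_succ_mul_a (i : ZMod 3) : a (i + 1) * a i = δ := by
  have rel : ∀ i, a (i + 1) * a i = a (i + 2) * a (i + 1) := fun i ↦ by
    have h : PresentedGroup.mk braidRels (FreeGroup.of (i + 1) * FreeGroup.of i *
        (FreeGroup.of (i + 2) * FreeGroup.of (i + 1))⁻¹) = 1 :=
      (QuotientGroup.eq_one_iff _).2 (Subgroup.subset_normalClosure ⟨i, rfl⟩)
    rwa [map_mul, map_inv, map_mul, map_mul, mul_inv_eq_one] at h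
  have h1 : a (1 + 1) * a 1 = δ := rfl
  have h0 : a (0 + 1) * a 0 = δ := (rel 0).trans h1
  have h2 : a (2 + 1) * a 2 = δ := (rel 2).trans h0
  fin_cases i
  exacts [h0, h1, h2]

lemma a_mul_a_add_two (i : ZMod 3) : a i * a (i + 2) = δ := by
  simpa [add_two_add_one_eq_self] using a_succ_mul_a (i + 2)

lemma a_mul_delta (i : ZMod 3) : a i * δ = δ * a (i + 1) := by
  calc a i * δ = a i * (a (i + 2) * a (i + 1)) := by
        rw [← a_succ_mul_a (i + 1), add_assoc, one_add_one_eq_two]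
    _ = δ * a (i + 1) := by rw [← mul_assoc, a_mul_a_add_two]

@[simp]
lemma wordProd_nil : wordProd [] = 1 := rfl

@[simp]
lemma wordProd_cons (i : ZMod 3) (l : List (ZMod 3)) :
    wordProd (i :: l) = a i * wordProd l := by
  simp [wordProd]

@[simp]
lemma wordProd_append (l₁ l₂ : List (ZMod 3)) :
    wordProd (l₁ ++ l₂) = wordProd l₁ * wordProd l₂ := by
  simp [wordProd]

lemma wordProd_mul_delta (l : List (ZMod 3)) :
    wordProd l * δ = δ * wordProd (l.map (· + 1)) := by
  induction l with
  | nil => simp [wordProd]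
  | cons i l ih =>
    rw [wordProd_cons, mul_assoc, ih, ← mul_assoc, a_mul_delta, mul_assoc, List.map_cons,
      wordProd_cons]

abbrev RevND (l : List (ZMod 3)) : Prop := l.IsChain (fun x y => x = y ∨ x = y + 1)

lemma ndWord_iff_revND_reverse {l : List (ZMod 3)} : NDWord l ↔ RevND l.reverse :=
  List.isChain_reverse.symm

lemma RevND.map_add_one {l : List (ZMod 3)} (hl : RevND l) : RevND (l.map (· + 1)) :=
  (List.isChain_map _).2 (hl.imp fun _ _ h ↦ h.imp (congrArg (· + 1)) (by rintro rfl; ring))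

/-- Right multiplication of `δ ^ u * wordProd l.reverse` by `a j`. -/
def mulGenRaw (j : ZMod 3) : ℤ × List (ZMod 3) → ℤ × List (ZMod 3)
  | (u, []) => (u, [j])
  | (u, i :: t) => if j = i ∨ j = i + 1 then (u, j :: i :: t) else (u + 1, t.map (· + 1))

lemma mulGenRaw_nil (j : ZMod 3) (u : ℤ) : mulGenRaw j (u, []) = (u, [j]) := rfl

lemma mulGenRaw_cons_of_mem {j i : ZMod 3} (h : j = i ∨ j = i + 1) (u : ℤ) (t : List (ZMod 3)) :
    mulGenRaw j (u, i :: t) = (u, j :: i :: t) :=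
  if_pos h

lemma mulGenRaw_cons_of_not_mem {j i : ZMod 3} (h : ¬(j = i ∨ j = i + 1)) (u : ℤ)
    (t : List (ZMod 3)) : mulGenRaw j (u, i :: t) = (u + 1, t.map (· + 1)) :=
  if_neg h

lemma mulGenRaw_of_revND_cons {j : ZMod 3} {l : List (ZMod 3)} (hl : RevND (j :: l)) (u : ℤ) :
    mulGenRaw j (u, l) = (u, j :: l) := by
  match l with
  | [] => rfl
  | _ :: _ => exact mulGenRaw_cons_of_mem (List.isChain_cons_cons.1 hl).1 u _

lemma revND_mulGenRaw (j : ZMod 3) (u : ℤ) {l : List (ZMod 3)} (hl : RevND l) :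
    RevND (mulGenRaw j (u, l)).2 := by
  match l with
  | [] => exact List.isChain_singleton j
  | i :: t =>
    by_cases h : j = i ∨ j = i + 1
    · rw [mulGenRaw_cons_of_mem h]
      exact hl.cons_cons h
    · rw [mulGenRaw_cons_of_not_mem h]
      exact RevND.map_add_one hl.tail

lemma mulGenRaw_mulGenRaw_succ (i : ZMod 3) (u : ℤ) {l : List (ZMod 3)} (hl : RevND l) :
    mulGenRaw i (mulGenRaw (i + 1) (u, l)) = (u + 1, l.map (· + 1)) := by
  have hi : ¬(i = i + 1 ∨ i = i + 1 + 1) := by revert i; decide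
  match l with
  | [] => rw [mulGenRaw_nil, mulGenRaw_cons_of_not_mem hi]
  | k :: t =>
    by_cases hk : i + 1 = k ∨ i + 1 = k + 1
    · rw [mulGenRaw_cons_of_mem hk, mulGenRaw_cons_of_not_mem hi]
    obtain rfl : k = i + 2 :=
      (by decide : ∀ i k : ZMod 3, ¬(i + 1 = k ∨ i + 1 = k + 1) → k = i + 2) i k hk
    rw [mulGenRaw_cons_of_not_mem hk, List.map_cons, add_two_add_one_eq_self]
    match t with
    | [] => rfl
    | k' :: t' =>
      have hk' : i = k' + 1 ∨ i = k' + 1 + 1 :=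
        (by decide : ∀ i k : ZMod 3, (i + 2 = k ∨ i + 2 = k + 1) → i = k + 1 ∨ i = k + 1 + 1)
          i k' (List.isChain_cons_cons.1 hl).1
      rw [List.map_cons, mulGenRaw_cons_of_mem hk']

/-- `⟨(u, l), _⟩` stands for `δ ^ u * wordProd l.reverse`: the word is stored reversed so that
right multiplication only inspects its head. -/
abbrev NormalForm : Type := {p : ℤ × List (ZMod 3) // RevND p.2}

namespace NormalForm

def mulGen (j : ZMod 3) (x : NormalForm) : NormalForm :=
  ⟨mulGenRaw j x.1, revND_mulGenRaw j x.1.1 x.2⟩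

def shift (x : NormalForm) : NormalForm :=
  ⟨(x.1.1 + 1, x.1.2.map (· + 1)), x.2.map_add_one⟩

lemma shift_bijective : Function.Bijective shift := by
  have map_add_three : ∀ l : List (ZMod 3), ((l.map (· + 1)).map (· + 1)).map (· + 1) = l := by
    intro l
    simp only [List.map_map]
    convert List.map_id l
    funext x
    revert x
    decide
  refine Function.bijective_iff_has_inverse.2
    ⟨fun x ↦ ⟨(x.1.1 - 1, (x.1.2.map (· + 1)).map (· + 1)), x.2.map_add_one.map_add_one⟩,
      fun x ↦ Subtype.ext ?_, fun x ↦ Subtype.ext ?_⟩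
  all_goals simp only [shift, map_add_three, add_sub_cancel_right, sub_add_cancel]

lemma mulGen_mulGen_succ (i : ZMod 3) (x : NormalForm) :
    mulGen i (mulGen (i + 1) x) = shift x :=
  Subtype.ext (mulGenRaw_mulGenRaw_succ i x.1.1 x.2)

lemma mulGen_bijective (j : ZMod 3) : Function.Bijective (mulGen j) := by
  refine ⟨Function.Injective.of_comp (f := mulGen (j - 1)) ?_,
    Function.Surjective.of_comp (g := mulGen (j + 1)) ?_⟩
  · convert shift_bijective.1 using 1
    funext x
    simpa using mulGen_mulGen_succ (j - 1) x
  · convert shift_bijective.2 using 1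
    funext x
    exact mulGen_mulGen_succ j x

def eval (x : NormalForm) : B3 := δ ^ x.1.1 * wordProd x.1.2.reverse

lemma eval_mulGen (j : ZMod 3) (x : NormalForm) : (mulGen j x).eval = x.eval * a j := by
  obtain ⟨⟨u, l⟩, hl⟩ := x
  match l with
  | [] => simp [eval, mulGen, mulGenRaw_nil, wordProd]
  | i :: t =>
    by_cases h : j = i ∨ j = i + 1
    · simp [eval, mulGen, mulGenRaw_cons_of_mem h, wordProd, mul_assoc]
    obtain rfl : j = i + 2 :=
      (by decide : ∀ i j : ZMod 3, ¬(j = i ∨ j = i + 1) → j = i + 2) i j h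
    simp only [eval, mulGen, mulGenRaw_cons_of_not_mem h, ← List.map_reverse, zpow_add_one,
      mul_assoc, ← wordProd_mul_delta, List.reverse_cons, wordProd_append]
    simp [a_mul_a_add_two]

noncomputable def mulGenPerm (j : ZMod 3) : Equiv.Perm NormalForm :=
  Equiv.ofBijective _ (mulGen_bijective j)

def base : NormalForm := ⟨(0, []), .nil⟩

end NormalForm

open NormalForm

noncomputable def rightAction : B3 →* (Equiv.Perm NormalForm)ᵐᵒᵖ :=
  PresentedGroup.toGroup (f := fun j ↦ .op (mulGenPerm j)) (by
    rintro r ⟨i, rfl⟩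
    simp only [map_mul, map_inv, FreeGroup.lift_apply_of, mul_inv_eq_one, ← MulOpposite.op_mul]
    congr 1
    ext x : 1
    simp only [Equiv.Perm.mul_apply, mulGenPerm, Equiv.ofBijective_apply,
      show i + 2 = i + 1 + 1 by ring, mulGen_mulGen_succ])

noncomputable def normalForm (α : B3) : NormalForm := (rightAction α).unop base

lemma normalForm_mul_a (α : B3) (j : ZMod 3) :
    normalForm (α * a j) = (normalForm α).mulGen j := by
  simp [normalForm, a, rightAction, mulGenPerm]

lemma normalForm_one : normalForm 1 = base := by
  simp [normalForm]

lemma eval_normalForm (α : B3) : (normalForm α).eval = α := by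
  induction (PresentedGroup.closure_range_of braidRels).symm ▸ Subgroup.mem_top α
    using Subgroup.closure_induction_right with
  | one => rw [normalForm_one]; simp [eval, base]
  | mul_right β _ _ hj ih =>
    obtain ⟨j, rfl⟩ := hj
    rw [← a, normalForm_mul_a, eval_mulGen, ih]
  | mul_inv_cancel β _ _ hj ih =>
    obtain ⟨j, rfl⟩ := hj
    have h := eval_mulGen j (normalForm (β * (a j)⁻¹))
    rw [← normalForm_mul_a, inv_mul_cancel_right, ih] at h
    exact eq_mul_inv_of_mul_eq h.symm

lemma normalForm_mul_delta (α : B3) : normalForm (α * δ) = (normalForm α).shift := by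
  rw [δ, ← mul_assoc, normalForm_mul_a, normalForm_mul_a, ← mulGen_mulGen_succ 1]
  rfl

lemma normalForm_delta_zpow (u : ℤ) : normalForm (δ ^ u) = ⟨(u, []), .nil⟩ := by
  induction u using Int.induction_on with
  | zero => exact normalForm_one
  | succ n ih => rw [zpow_add_one, normalForm_mul_delta, ih]; rfl
  | pred n ih =>
    apply shift_bijective.1
    rw [← normalForm_mul_delta, ← zpow_add_one, sub_add_cancel, ih]
    exact Subtype.ext (by simp [shift])

lemma normalForm_eval (x : NormalForm) : normalForm x.eval = x := by
  obtain ⟨⟨u, l⟩, hl⟩ := x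
  induction l with
  | nil => simpa [eval] using normalForm_delta_zpow u
  | cons j l ih =>
    have hl' : RevND l := hl.tail
    have h : mulGen j ⟨(u, l), hl'⟩ = ⟨(u, j :: l), hl⟩ :=
      Subtype.ext (mulGenRaw_of_revND_cons hl u)
    rw [← h, eval_mulGen, normalForm_mul_a, ih hl']

/-- Garside normal form (Xu): every 3-braid is uniquely `δ^u P` with `P` a nondecreasing
positive word. -/
theorem garside_normal_form (α : B3) :
    ∃ u : ℤ, ∃ l : List (ZMod 3), NDWord l ∧ α = δ ^ u * wordProd l ∧
      ∀ (u' : ℤ) (l' : List (ZMod 3)), NDWord l' → α = δ ^ u' * wordProd l' →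
        u' = u ∧ l' = l := by
  refine ⟨(normalForm α).1.1, (normalForm α).1.2.reverse,
    ndWord_iff_revND_reverse.2 (by simpa using (normalForm α).2), (eval_normalForm α).symm, ?_⟩
  rintro u' l' hl' rfl
  have h := normalForm_eval ⟨(u', l'.reverse), ndWord_iff_revND_reverse.1 hl'⟩
  simp only [eval, List.reverse_reverse] at h
  simp [h]

end Braid
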